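/- Let S ⊆ ℤ^d be a finite set that is not contained in any line (its affine span has dimension at least 2), and let s₀ ∈ S. Then there exists an AP-free finite colouring of ℝ^d containing no almost-monochromatic positive homothetic copy of (S, s₀). -/

import Mathlib

/-!
Colour a real number by the parity of `⌊log₂ |x|⌋`. Along a real arithmetic progression with
nonzero step the values eventually sweep through consecutive dyadic ranges `[2ᶻ, 2ᶻ⁺¹)`, so this
colouring changes infinitely often. Pick `s₁, s₂ ∈ S` with `s₁ - s₀`, `s₂ - s₀` linearly
independent, and colour `x` by the log-parities of the coordinates of its classes modulo the lines
`ℝ ∙ (s₁ - s₀)` and `ℝ ∙ (s₂ - s₀)`. A monochromatic progression has step in both lines, hence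
zero. In a homothet `c + l • S`, the apex `c + l • s₀` has the same first class as `c + l • s₁` and
the same second class as `c + l • s₂`; if these two points share a colour, so does the apex.
-/

/-- A colouring of `ℝ^d` is AP-free if no infinite arithmetic progression
`{a + n • v : n ∈ ℕ}` with `v ≠ 0` is monochromatic. -/
def APFree {d k : ℕ} (φ : EuclideanSpace ℝ (Fin d) → Fin k) : Prop :=
  ¬ ∃ (a v : EuclideanSpace ℝ (Fin d)) (c : Fin k), v ≠ 0 ∧
      ∀ n : ℕ, φ (a + (n : ℝ) • v) = c

/-- The pair `(S, s₀)` is almost-monochromatic under `φ`. -/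
def AlmostMono {X : Type*} {k : ℕ} (φ : X → Fin k) (S : Set X) (s₀ : X) : Prop :=
  (∃ c, ∀ x ∈ S \ {s₀}, φ x = c) ∧ ¬ ∃ c, ∀ x ∈ S, φ x = c

open Module

noncomputable def logParity (x : ℝ) : ZMod 2 := Int.log 2 |x|

lemma logParity_neg (x : ℝ) : logParity (-x) = logParity x := by
  rw [logParity, logParity, abs_neg]

lemma Int.log_eq_of_mem_Ico {b : ℕ} (hb : 1 < b) {y : ℝ} {z : ℤ}
    (hy : y ∈ Set.Ico ((b : ℝ) ^ z) ((b : ℝ) ^ (z + 1))) : Int.log b y = z := by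
  have hpos : 0 < y := (zpow_pos (by positivity) z).trans_le hy.1
  have h₁ := (Int.zpow_le_iff_le_log hb hpos).1 hy.1
  have h₂ := (Int.lt_zpow_iff_log_lt hb hpos).1 hy.2
  omega

lemma exists_nat_add_mul_mem_Ico {b r L : ℝ} (hr : 0 < r) (hbL : b ≤ L) :
    ∃ n : ℕ, b + n * r ∈ Set.Ico L (L + r) := by
  have hq : 0 ≤ (L - b) / r := div_nonneg (sub_nonneg.2 hbL) hr.le
  have hle := mul_le_mul_of_nonneg_right (Nat.le_ceil ((L - b) / r)) hr.le
  have hlt := mul_lt_mul_of_pos_right (Nat.ceil_lt_add_one hq) hr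
  rw [div_mul_cancel₀ _ hr.ne'] at hle
  rw [add_mul, div_mul_cancel₀ _ hr.ne'] at hlt
  exact ⟨⌈(L - b) / r⌉₊, by linarith, by linarith⟩

lemma exists_logParity_ne_of_pos (b : ℝ) {r : ℝ} (hr : 0 < r) :
    ∃ n m : ℕ, logParity (b + n * r) ≠ logParity (b + m * r) := by
  obtain ⟨n, hn⟩ := exists_nat_add_mul_mem_Ico hr (by linarith [le_abs_self b] : b ≤ |b| + r)
  have hrx : r ≤ b + n * r := by linarith [abs_nonneg b, hn.1]
  have hbx : b ≤ b + n * r := by linarith [le_abs_self b, hn.1]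
  set z := Int.log 2 (b + n * r)
  have hz : b + n * r < 2 ^ (z + 1) := by
    exact_mod_cast Int.lt_zpow_succ_log_self (R := ℝ) one_lt_two (b + n * r)
  obtain ⟨m, hm⟩ := exists_nat_add_mul_mem_Ico hr (hbx.trans hz.le)
  -- `r < 2 ^ (z + 1)`, so the window `[2 ^ (z + 1), 2 ^ (z + 1) + r)` lies in the next
  -- dyadic range.
  have hwin : (2 : ℝ) ^ (z + 1) + r ≤ 2 ^ (z + 1 + 1) := by
    rw [zpow_add_one₀ two_ne_zero (z + 1)]
    linarith
  have hlog : Int.log 2 (b + m * r) = z + 1 :=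
    Int.log_eq_of_mem_Ico one_lt_two (by push_cast; exact ⟨hm.1, hm.2.trans_le hwin⟩)
  refine ⟨m, n, ?_⟩
  rw [logParity, logParity, abs_of_pos ((zpow_pos two_pos _).trans_le hm.1), hlog,
    abs_of_pos (hr.trans_le hrx)]
  simp [z]

lemma exists_logParity_ne (b : ℝ) {r : ℝ} (hr : r ≠ 0) :
    ∃ n m : ℕ, logParity (b + n * r) ≠ logParity (b + m * r) := by
  rcases hr.lt_or_gt with hr | hr
  · obtain ⟨n, m, h⟩ := exists_logParity_ne_of_pos (-b) (neg_pos.2 hr)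
    refine ⟨n, m, ?_⟩
    have hflip (k : ℕ) : b + k * r = -(-b + k * -r) := by ring
    simpa only [hflip, logParity_neg] using h
  · exact exists_logParity_ne_of_pos b hr

section Colourings

variable {ι V W : Type*} [AddCommGroup V] [Module ℝ V] [AddCommGroup W] [Module ℝ W]

noncomputable def coordLogParity (b : Basis ι ℝ W) (y : W) (i : ι) : ZMod 2 :=
  logParity (b.repr y i)

lemma eq_zero_of_forall_coordLogParity_eq (b : Basis ι ℝ W) {y w : W} {c : ι → ZMod 2}
    (h : ∀ n : ℕ, coordLogParity b (y + (n : ℝ) • w) = c) : w = 0 := by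
  by_contra hw
  obtain ⟨i, hi⟩ : ∃ i, b.repr w i ≠ 0 := by
    by_contra! h0
    exact hw (b.repr.map_eq_zero_iff.1 (Finsupp.ext h0))
  obtain ⟨n, m, hnm⟩ := exists_logParity_ne (b.repr y i) hi
  apply hnm
  simpa [coordLogParity] using congrFun ((h n).trans (h m).symm) i

noncomputable def quotientColouring (P : Submodule ℝ V) [Module.Finite ℝ (V ⧸ P)] (x : V) :
    Fin (finrank ℝ (V ⧸ P)) → ZMod 2 :=
  coordLogParity (Module.finBasis ℝ (V ⧸ P)) (P.mkQ x)

lemma quotientColouring_add_of_mem (P : Submodule ℝ V) [Module.Finite ℝ (V ⧸ P)] (x : V)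
    {p : V} (hp : p ∈ P) : quotientColouring P (x + p) = quotientColouring P x := by
  simp [quotientColouring, (Submodule.Quotient.mk_eq_zero P).2 hp]

lemma mem_of_forall_quotientColouring_eq {P : Submodule ℝ V} [Module.Finite ℝ (V ⧸ P)] {a v : V}
    {c : Fin (finrank ℝ (V ⧸ P)) → ZMod 2}
    (h : ∀ n : ℕ, quotientColouring P (a + (n : ℝ) • v) = c) : v ∈ P := by
  rw [← Submodule.Quotient.mk_eq_zero]
  exact eq_zero_of_forall_coordLogParity_eq _ (y := P.mkQ a) fun n => by
    simpa [quotientColouring] using h n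

variable [FiniteDimensional ℝ V]

noncomputable def lineQuotientsColouring (u₁ u₂ x : V) :
    (Fin (finrank ℝ (V ⧸ ℝ ∙ u₁)) → ZMod 2) × (Fin (finrank ℝ (V ⧸ ℝ ∙ u₂)) → ZMod 2) :=
  (quotientColouring (ℝ ∙ u₁) x, quotientColouring (ℝ ∙ u₂) x)

lemma lineQuotientsColouring_eq_of_eq {u₁ u₂ x : V} {t : ℝ}
    (h : lineQuotientsColouring u₁ u₂ (x + t • u₁) = lineQuotientsColouring u₁ u₂ (x + t • u₂)) :
    lineQuotientsColouring u₁ u₂ x = lineQuotientsColouring u₁ u₂ (x + t • u₁) := by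
  have h₁ := quotientColouring_add_of_mem (ℝ ∙ u₁) x (Submodule.mem_span_singleton.2 ⟨t, rfl⟩)
  have h₂ := quotientColouring_add_of_mem (ℝ ∙ u₂) x (Submodule.mem_span_singleton.2 ⟨t, rfl⟩)
  exact Prod.ext h₁.symm (h₂.symm.trans (congrArg Prod.snd h).symm)

lemma eq_zero_of_forall_lineQuotientsColouring_eq {u₁ u₂ a v : V} {c}
    (hu : LinearIndependent ℝ ![u₁, u₂])
    (h : ∀ n : ℕ, lineQuotientsColouring u₁ u₂ (a + (n : ℝ) • v) = c) : v = 0 := by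
  obtain ⟨t₁, rfl⟩ := Submodule.mem_span_singleton.1
    (mem_of_forall_quotientColouring_eq fun n => congrArg Prod.fst (h n))
  obtain ⟨t₂, h₂⟩ := Submodule.mem_span_singleton.1
    (mem_of_forall_quotientColouring_eq fun n => congrArg Prod.snd (h n))
  have := LinearIndependent.pair_iff.1 hu t₁ (-t₂) (by rw [neg_smul, h₂, add_neg_cancel])
  simp [this.1]

end Colourings

lemma exists_linearIndependent_sub_of_not_collinear {K V : Type*} [Field K] [AddCommGroup V]
    [Module K V] {S : Set V} (hS : ¬ ∃ a v : V, ∀ p ∈ S, ∃ t : K, p = a + t • v) (s₀ : V) :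
    ∃ s₁ ∈ S, ∃ s₂ ∈ S, LinearIndependent K ![s₁ - s₀, s₂ - s₀] := by
  by_contra! hdep
  apply hS
  by_cases h : ∃ s₁ ∈ S, s₁ ≠ s₀
  · obtain ⟨s₁, hs₁, hne⟩ := h
    refine ⟨s₀, s₁ - s₀, fun p hp => ?_⟩
    obtain ⟨t, ht⟩ : ∃ t : K, t • (s₁ - s₀) = p - s₀ := by
      simpa using (LinearIndependent.pair_iff' (sub_ne_zero.2 hne)).not.1 (hdep s₁ hs₁ p hp)
    exact ⟨t, by rw [ht]; abel⟩
  · push Not at h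
    exact ⟨s₀, 0, fun p hp => ⟨0, by simp [h p hp]⟩⟩

lemma AlmostMono.apply_ne {X : Type*} {k : ℕ} {φ : X → Fin k} {T : Set X} {y p : X}
    (h : AlmostMono φ T y) (hp : p ∈ T) (hpy : p ≠ y) : φ y ≠ φ p := by
  obtain ⟨⟨c, hc⟩, hnot⟩ := h
  intro hyp
  refine hnot ⟨c, fun x hx => ?_⟩
  by_cases hxy : x = y
  · rw [hxy, hyp]
    exact hc p ⟨hp, hpy⟩
  · exact hc x ⟨hx, hxy⟩

theorem no_am_positive_homothet_general (d : ℕ) (S : Set (EuclideanSpace ℝ (Fin d)))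
    (hnoline : ¬ ∃ a v : EuclideanSpace ℝ (Fin d), ∀ p ∈ S, ∃ t : ℝ, p = a + t • v)
    (s₀ : EuclideanSpace ℝ (Fin d)) :
    ∃ (k : ℕ) (φ : EuclideanSpace ℝ (Fin d) → Fin k), APFree φ ∧
      ¬ ∃ (c : EuclideanSpace ℝ (Fin d)) (l : ℝ), 0 < l ∧
        AlmostMono φ ((fun s => c + l • s) '' S) (c + l • s₀) := by
  obtain ⟨s₁, hs₁, s₂, hs₂, hind⟩ := exists_linearIndependent_sub_of_not_collinear hnoline s₀
  refine ⟨_, Fintype.equivFin _ ∘ lineQuotientsColouring (s₁ - s₀) (s₂ - s₀), ?_, ?_⟩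
  · rintro ⟨a, v, c, hv, hc⟩
    exact hv (eq_zero_of_forall_lineQuotientsColouring_eq hind fun n =>
      (Equiv.eq_symm_apply _).2 (hc n))
  · rintro ⟨c, l, hl, hAM⟩
    have hne (s : EuclideanSpace ℝ (Fin d)) (hs : s - s₀ ≠ 0) : c + l • s ≠ c + l • s₀ := by
      simpa [hl.ne', sub_eq_zero] using hs
    have hshift (s : EuclideanSpace ℝ (Fin d)) : c + l • s₀ + l • (s - s₀) = c + l • s := by
      rw [smul_sub]; abel
    have hne₁ := hne s₁ (hind.ne_zero 0)
    obtain ⟨c₀, hc₀⟩ := hAM.1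
    refine hAM.apply_ne (Set.mem_image_of_mem _ hs₁) hne₁ (congrArg (Fintype.equivFin _) ?_)
    rw [← hshift s₁]
    refine lineQuotientsColouring_eq_of_eq ((Fintype.equivFin _).injective ?_)
    rw [hshift, hshift]
    exact (hc₀ _ ⟨Set.mem_image_of_mem _ hs₁, hne₁⟩).trans
      (hc₀ _ ⟨Set.mem_image_of_mem _ hs₂, hne s₂ (hind.ne_zero 1)⟩).symm

/-- If the finite set `S ⊆ ℤ^d` is not contained in any line and
`s₀ ∈ S`, then there is an AP-free finite colouring of `ℝ^d` with no
almost-monochromatic positive homothet of `(S, s₀)`. -/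
theorem no_am_positive_homothet (d : ℕ) (S : Set (EuclideanSpace ℝ (Fin d)))
    (hfin : S.Finite) (hZ : ∀ p ∈ S, ∀ i, ∃ z : ℤ, p i = (z : ℝ))
    (hnoline : ¬ ∃ a v : EuclideanSpace ℝ (Fin d), ∀ p ∈ S, ∃ t : ℝ, p = a + t • v)
    (s₀ : EuclideanSpace ℝ (Fin d)) (hs₀ : s₀ ∈ S) :
    ∃ (k : ℕ) (φ : EuclideanSpace ℝ (Fin d) → Fin k), APFree φ ∧
      ¬ ∃ (c : EuclideanSpace ℝ (Fin d)) (l : ℝ), 0 < l ∧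
        AlmostMono φ ((fun s => c + l • s) '' S) (c + l • s₀) :=
  no_am_positive_homothet_general d S hnoline s₀
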